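/- arXiv:1810.02434 — 2 statements merged into one kernel-verified Lean document; each statement's English description precedes it below -/
import Mathlib

section
/- Suppose Δ_h is a complete abstraction of Δ_l relative to m (every model of Δ_h has an m-isomorphic model of Δ_l), in the unweighted setting. Then for every high-level formula φ: (a) if Pr(φ, Δ_h, w_h) > 0 then Pr(m(φ), Δ_l, w_l) > 0; and (b) if Pr(m(φ), Δ_l, w_l) = 1 then Pr(φ, Δ_h, w_h) = 1. -/
/-- Propositional formulas over atoms of type `α`. -/
inductive Form (α : Type) where
  | tru : Form α
  | atom : α → Form α
  | neg : Form α → Form α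
  | conj : Form α → Form α → Form α
  | disj : Form α → Form α → Form α

/-- Truth value of a formula in a model `M : α → Bool`. -/
def Form.eval {α : Type} (M : α → Bool) : Form α → Bool
  | .tru => true
  | .atom a => M a
  | .neg φ => !(φ.eval M)
  | .conj φ ψ => φ.eval M && ψ.eval M
  | .disj φ ψ => φ.eval M || ψ.eval M

/-- Homomorphic extension of a refinement mapping `m` on atoms to all formulas. -/
def Form.map {α β : Type} (m : α → Form β) : Form α → Form β
  | .tru => .tru
  | .atom a => m a
  | .neg φ => .neg (φ.map m)
  | .conj φ ψ => .conj (φ.map m) (ψ.map m)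
  | .disj φ ψ => .disj (φ.map m) (ψ.map m)

/-- The set of atoms mentioned in a formula. -/
def Form.atoms {α : Type} [DecidableEq α] : Form α → Finset α
  | .tru => ∅
  | .atom a => {a}
  | .neg φ => φ.atoms
  | .conj φ ψ => φ.atoms ∪ ψ.atoms
  | .disj φ ψ => φ.atoms ∪ ψ.atoms

/-- Weighted model count of `Δ` under literal weights `w` (`w a true` is the
weight of the positive literal on atom `a`, `w a false` of the negative one). -/
noncomputable def WMC {α : Type} [Fintype α] [DecidableEq α]
    (Δ : Form α) (w : α → Bool → ℝ) : ℝ :=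
  ∑ M ∈ Finset.univ.filter (fun M : α → Bool => Δ.eval M = true), ∏ a, w a (M a)

/-- `Pr(φ, Δ, w) = WMC(φ ∧ Δ, w) / WMC(Δ, w)`. -/
noncomputable def Pr {α : Type} [Fintype α] [DecidableEq α]
    (φ Δ : Form α) (w : α → Bool → ℝ) : ℝ :=
  WMC (Form.conj φ Δ) w / WMC Δ w

/-- `Mh` is `m`-isomorphic to `Ml`. -/
def Iso {α β : Type} (m : α → Form β) (Mh : α → Bool) (Ml : β → Bool) : Prop :=
  ∀ a : α, Mh a = (m a).eval Ml

/-!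
With unit weights, `Pr(φ, Δ) > 0` says that `φ ∧ Δ` is satisfiable, and `Pr(φ, Δ) = 1` says
that `Δ` is satisfiable and entails `φ`. An `m`-isomorphic model satisfies `m(φ)` exactly when
the high-level model satisfies `φ`, so completeness carries a model of `φ ∧ Δh` to a model of
`m(φ) ∧ Δl`, and carries the entailment `Δl ⊨ m(φ)` back to `Δh ⊨ φ`.
-/

theorem Form.eval_map {α β : Type} {m : α → Form β} {Mh : α → Bool} {Ml : β → Bool}
    (h : Iso m Mh Ml) (φ : Form α) : (φ.map m).eval Ml = φ.eval Mh := by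
  induction φ with
  | tru => rfl
  | atom a => exact (h a).symm
  | neg φ ih => simp only [Form.map, Form.eval, ih]
  | conj φ ψ ih₁ ih₂ => simp only [Form.map, Form.eval, ih₁, ih₂]
  | disj φ ψ ih₁ ih₂ => simp only [Form.map, Form.eval, ih₁, ih₂]

section UnitWeights

variable {α : Type} [Fintype α] [DecidableEq α]

def Form.models (Δ : Form α) : Finset (α → Bool) :=
  Finset.univ.filter fun M => Δ.eval M = true

theorem Form.mem_models {Δ : Form α} {M : α → Bool} : M ∈ Δ.models ↔ Δ.eval M = true := by
  simp [Form.models]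

theorem Form.models_conj_subset (φ Δ : Form α) : (Form.conj φ Δ).models ⊆ Δ.models := by
  intro M
  simp only [Form.mem_models, Form.eval, Bool.and_eq_true]
  exact And.right

theorem WMC_one (Δ : Form α) : WMC Δ (fun _ _ => (1:ℝ)) = Δ.models.card := by
  simp [WMC, Form.models]

theorem Pr_one (φ Δ : Form α) :
    Pr φ Δ (fun _ _ => (1:ℝ)) = ((Form.conj φ Δ).models.card : ℝ) / Δ.models.card := by
  rw [Pr, WMC_one, WMC_one]

theorem Pr_one_pos_iff {φ Δ : Form α} :
    0 < Pr φ Δ (fun _ _ => (1:ℝ)) ↔ ∃ M, φ.eval M = true ∧ Δ.eval M = true := by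
  have hsub := Form.models_conj_subset φ Δ
  rw [Pr_one]
  constructor
  · intro hpos
    obtain ⟨M, hM⟩ : (Form.conj φ Δ).models.Nonempty := by
      by_contra hempty
      simp [Finset.not_nonempty_iff_eq_empty.mp hempty] at hpos
    exact ⟨M, by simpa only [Form.mem_models, Form.eval, Bool.and_eq_true] using hM⟩
  · rintro ⟨M, hφ, hΔ⟩
    have hM : M ∈ (Form.conj φ Δ).models := by
      simp only [Form.mem_models, Form.eval, hφ, hΔ, Bool.and_self]
    have hnum : 0 < (Form.conj φ Δ).models.card := Finset.card_pos.mpr ⟨M, hM⟩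
    have hden : 0 < Δ.models.card := Finset.card_pos.mpr ⟨M, hsub hM⟩
    positivity

theorem Pr_one_eq_one_iff {φ Δ : Form α} :
    Pr φ Δ (fun _ _ => (1:ℝ)) = 1 ↔
      (∃ M, Δ.eval M = true) ∧ ∀ M, Δ.eval M = true → φ.eval M = true := by
  have hsub := Form.models_conj_subset φ Δ
  have mem_conj_iff {M : α → Bool} (hΔ : Δ.eval M = true) :
      M ∈ (Form.conj φ Δ).models ↔ φ.eval M = true := by
    simp only [Form.mem_models, Form.eval, hΔ, Bool.and_true]
  rw [Pr_one]
  constructor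
  · intro h
    have hden : Δ.models.card ≠ 0 := by
      rintro h0
      simp [h0] at h
    have hcard : (Form.conj φ Δ).models.card = Δ.models.card := by
      exact_mod_cast (div_eq_one_iff_eq (by exact_mod_cast hden)).mp h
    have heq := Finset.eq_of_subset_of_card_le hsub hcard.ge
    obtain ⟨M, hM⟩ := Finset.card_ne_zero.mp hden
    refine ⟨⟨M, Form.mem_models.mp hM⟩, fun M hΔ => ?_⟩
    rw [← mem_conj_iff hΔ, heq]
    exact Form.mem_models.mpr hΔ
  · rintro ⟨⟨M, hM⟩, hentails⟩
    have heq : (Form.conj φ Δ).models = Δ.models := by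
      refine hsub.antisymm fun M hM => ?_
      have hΔ := Form.mem_models.mp hM
      exact (mem_conj_iff hΔ).mpr (hentails M hΔ)
    have hden : 0 < Δ.models.card := Finset.card_pos.mpr ⟨M, Form.mem_models.mpr hM⟩
    rw [heq, div_self (by positivity)]

end UnitWeights

theorem stmt6_general {α β : Type} [Fintype α] [DecidableEq α] [Fintype β] [DecidableEq β]
    (Δh : Form α) (Δl : Form β) (m : α → Form β)
    (hsath : ∃ M : α → Bool, Δh.eval M = true)
    (hcomplete : ∀ Mh : α → Bool, Δh.eval Mh = true →
      ∃ Ml : β → Bool, Δl.eval Ml = true ∧ Iso m Mh Ml) :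
    ∀ φ : Form α,
      (0 < Pr φ Δh (fun _ _ => (1:ℝ)) → 0 < Pr (φ.map m) Δl (fun _ _ => (1:ℝ))) ∧
      (Pr (φ.map m) Δl (fun _ _ => (1:ℝ)) = 1 → Pr φ Δh (fun _ _ => (1:ℝ)) = 1) := by
  intro φ
  constructor
  · rw [Pr_one_pos_iff, Pr_one_pos_iff]
    rintro ⟨Mh, hφ, hΔh⟩
    obtain ⟨Ml, hΔl, hiso⟩ := hcomplete Mh hΔh
    exact ⟨Ml, (Form.eval_map hiso φ).trans hφ, hΔl⟩
  · rw [Pr_one_eq_one_iff, Pr_one_eq_one_iff]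
    rintro ⟨-, hentails⟩
    refine ⟨hsath, fun Mh hΔh => ?_⟩
    obtain ⟨Ml, hΔl, hiso⟩ := hcomplete Mh hΔh
    exact (Form.eval_map hiso φ).symm.trans (hentails Ml hΔl)

theorem stmt6 {α β : Type} [Fintype α] [DecidableEq α] [Fintype β] [DecidableEq β]
    (Δh : Form α) (Δl : Form β) (m : α → Form β)
    (hsath : ∃ M : α → Bool, Δh.eval M = true)
    (hsatl : ∃ M : β → Bool, Δl.eval M = true)
    (hcomplete : ∀ Mh : α → Bool, Δh.eval Mh = true →
      ∃ Ml : β → Bool, Δl.eval Ml = true ∧ Iso m Mh Ml) :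
    ∀ φ : Form α,
      (0 < Pr φ Δh (fun _ _ => (1:ℝ)) → 0 < Pr (φ.map m) Δl (fun _ _ => (1:ℝ))) ∧
      (Pr (φ.map m) Δl (fun _ _ => (1:ℝ)) = 1 → Pr φ Δh (fun _ _ => (1:ℝ)) = 1) :=
  stmt6_general Δh Δl m hsath hcomplete
end

section
/- Suppose (Δ_h, w_h) is a weighted sound abstraction of (Δ_l, w_l) relative to m, i.e., Δ_h is a sound abstraction of Δ_l relative to m and for every high-level literal d, Pr(m(d), Δ_l, w_l) > 0 implies Pr(d, Δ_h, w_h) > 0. Then for every high-level formula φ, Pr(m(φ), Δ_l, w_l) > 0 implies Pr(φ, Δ_h, w_h) > 0. -/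
lemma WMC_nonneg {α : Type} [Fintype α] [DecidableEq α] (Δ : Form α) (w : α → Bool → ℝ)
    (hw : ∀ a b, 0 ≤ w a b) : 0 ≤ WMC Δ w :=
  Finset.sum_nonneg fun M _ => Finset.prod_nonneg fun a _ => hw a (M a)

lemma WMC_pos_iff {α : Type} [Fintype α] [DecidableEq α] (Δ : Form α) (w : α → Bool → ℝ)
    (hw : ∀ a b, 0 ≤ w a b) :
    0 < WMC Δ w ↔ ∃ M : α → Bool, Δ.eval M = true ∧ 0 < ∏ a, w a (M a) := by
  constructor
  · intro h
    by_contra hc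
    push_neg at hc
    have : WMC Δ w = 0 := by
      apply Finset.sum_eq_zero
      intro M hM
      rw [Finset.mem_filter] at hM
      exact le_antisymm (hc M hM.2) (Finset.prod_nonneg fun a _ => hw a (M a))
    rw [this] at h; exact lt_irrefl 0 h
  · rintro ⟨M, hM, hp⟩
    refine lt_of_lt_of_le hp (Finset.single_le_sum (f := fun M : α → Bool => ∏ a, w a (M a))
      (fun N _ => Finset.prod_nonneg fun a _ => hw a (N a)) ?_)
    exact Finset.mem_filter.2 ⟨Finset.mem_univ M, hM⟩

lemma eval_map_iso {α β : Type} (m : α → Form β) (Mh : α → Bool) (Ml : β → Bool)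
    (hiso : Iso m Mh Ml) : ∀ φ : Form α, (φ.map m).eval Ml = φ.eval Mh := by
  intro φ
  induction φ with
  | tru => rfl
  | atom a => exact (hiso a).symm
  | neg φ ih => simp [Form.map, Form.eval, ih]
  | conj φ ψ ih1 ih2 => simp [Form.map, Form.eval, ih1, ih2]
  | disj φ ψ ih1 ih2 => simp [Form.map, Form.eval, ih1, ih2]

lemma Pr_pos_iff {α : Type} [Fintype α] [DecidableEq α] (φ Δ : Form α) (w : α → Bool → ℝ)
    (hw : ∀ a b, 0 ≤ w a b) (hΔ : 0 < WMC Δ w) :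
    0 < Pr φ Δ w ↔ 0 < WMC (Form.conj φ Δ) w := by
  unfold Pr
  constructor
  · intro h
    rcases lt_or_eq_of_le (WMC_nonneg (Form.conj φ Δ) w hw) with h' | h'
    · exact h'
    · rw [← h', zero_div] at h; exact absurd h (lt_irrefl 0)
  · intro h; exact div_pos h hΔ

theorem stmt8 {α β : Type} [Fintype α] [DecidableEq α] [Fintype β] [DecidableEq β]
    (Δh : Form α) (Δl : Form β) (wh : α → Bool → ℝ) (wl : β → Bool → ℝ) (m : α → Form β)
    (hwh : ∀ a b, 0 ≤ wh a b) (hwl : ∀ a b, 0 ≤ wl a b)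
    (hΔh : WMC Δh wh ≠ 0) (hΔl : WMC Δl wl ≠ 0)
    (hsound : ∀ Ml : β → Bool, Δl.eval Ml = true →
      ∃ Mh : α → Bool, Δh.eval Mh = true ∧ Iso m Mh Ml)
    (hlit : ∀ a : α,
      (0 < Pr ((Form.atom a).map m) Δl wl → 0 < Pr (Form.atom a) Δh wh) ∧
      (0 < Pr ((Form.neg (Form.atom a)).map m) Δl wl →
        0 < Pr (Form.neg (Form.atom a)) Δh wh)) :
    ∀ φ : Form α, 0 < Pr (φ.map m) Δl wl → 0 < Pr φ Δh wh := by
  have hΔhpos : 0 < WMC Δh wh := lt_of_le_of_ne (WMC_nonneg Δh wh hwh) (Ne.symm hΔh)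
  have hΔlpos : 0 < WMC Δl wl := lt_of_le_of_ne (WMC_nonneg Δl wl hwl) (Ne.symm hΔl)
  intro φ hpr
  have hnum : 0 < WMC (Form.conj (φ.map m) Δl) wl :=
    (Pr_pos_iff _ _ _ hwl hΔlpos).1 hpr
  obtain ⟨Ml, hMl, hprod⟩ := (WMC_pos_iff _ _ hwl).1 hnum
  simp only [Form.eval, Bool.and_eq_true] at hMl
  obtain ⟨Mh, hMh, hiso⟩ := hsound Ml hMl.2
  -- each high-level weight at Mh is positive
  have hwpos : ∀ a : α, 0 < wh a (Mh a) := by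
    intro a
    set d : Form α := if Mh a = true then Form.atom a else Form.neg (Form.atom a) with hd
    have hdMh : d.eval Mh = true := by
      rcases Bool.eq_false_or_eq_true (Mh a) with h | h <;>
        simp [hd, h, Form.eval]
    have hdMl : (d.map m).eval Ml = true := by
      rw [eval_map_iso m Mh Ml hiso]; exact hdMh
    have hPrl : 0 < Pr (d.map m) Δl wl := by
      rw [Pr_pos_iff _ _ _ hwl hΔlpos]
      refine (WMC_pos_iff _ _ hwl).2 ⟨Ml, ?_, hprod⟩
      simp [Form.eval, hdMl, hMl.2]
    have hPrh : 0 < Pr d Δh wh := by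
      rcases Bool.eq_false_or_eq_true (Mh a) with h | h
      · have := (hlit a).1
        simp only [hd, h, reduceIte] at hPrl ⊢
        exact this hPrl
      · have := (hlit a).2
        simp only [hd, h, reduceIte, Bool.false_eq_true] at hPrl ⊢
        exact this hPrl
    rw [Pr_pos_iff _ _ _ hwh hΔhpos] at hPrh
    obtain ⟨Mh', hMh', hprod'⟩ := (WMC_pos_iff _ _ hwh).1 hPrh
    simp only [Form.eval, Bool.and_eq_true] at hMh'
    have heq : Mh' a = Mh a := by
      rcases Bool.eq_false_or_eq_true (Mh a) with h | h <;>
        [ (simp [hd, h, Form.eval] at hMh'; simp [hMh'.1, h]);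
          (simp [hd, h, Form.eval] at hMh'; simp [hMh'.1, h]) ]
    have : 0 < wh a (Mh' a) := by
      rcases lt_or_eq_of_le (hwh a (Mh' a)) with h' | h'
      · exact h'
      · exfalso
        have : (∏ b, wh b (Mh' b)) = 0 :=
          Finset.prod_eq_zero (Finset.mem_univ a) h'.symm
        rw [this] at hprod'; exact lt_irrefl 0 hprod'
    rwa [heq] at this
  rw [Pr_pos_iff _ _ _ hwh hΔhpos]
  refine (WMC_pos_iff _ _ hwh).2 ⟨Mh, ?_, Finset.prod_pos fun a _ => hwpos a⟩
  have : φ.eval Mh = true := by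
    rw [← eval_map_iso m Mh Ml hiso]; exact hMl.1
  simp [Form.eval, this, hMh]
end
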